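/- arXiv:2206.13364 — 2 statements merged into one kernel-verified Lean document; each statement's English description precedes it below -/
import Mathlib

section
/- Consider an SRLK steady-state branch and let N° = min(N_1, …, N_n) be the common total copy number of the limiting components. Then there exists c_z > 0 such that z(L) → c_z as L → +∞, and the signalling and dummy functions satisfy lim_{L→+∞} σ(L) = (K_0·c_z·Π_{i=1}^{n}K_i)/(Π_{i=1}^{n}K_i' + K_0·c_z·Π_{i=1}^{n}K_i)·N° and lim_{L→+∞} δ(L) = (Π_{i=1}^{n}K_i')/(Π_{i=1}^{n}K_i' + K_0·c_z·Π_{i=1}^{n}K_i)·N°. -/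
/-! SRLK model with `n+1` trans-membrane chains `X_1, …, X_{n+1}` (indexed by
`Fin (n+1)`, so the paper's "`n ≥ 1` chains" corresponds to `n+1` here), an extrinsic
kinase `Z` with affinity `K0`, signalling affinities `K i`, dummy affinities `K' i`,
and total copy numbers `Nz` and `N i`. -/

/-- The signalling function `σ = K0·z·L·Π_j (K_j·x_j)`. -/
def srlkSigma (n : ℕ) (K0 : ℝ) (K : Fin (n+1) → ℝ) (z L : ℝ)
    (x : Fin (n+1) → ℝ) : ℝ :=
  K0 * z * L * ∏ j, (K j * x j)

/-- The dummy function `δ = L·Π_j (K'_j·x_j)`. -/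
def srlkDelta (n : ℕ) (K' : Fin (n+1) → ℝ) (L : ℝ) (x : Fin (n+1) → ℝ) : ℝ :=
  L * ∏ j, (K' j * x j)

/-- The SRLK steady-state equations at ligand concentration `L`. -/
def srlkSteady (n : ℕ) (K0 : ℝ) (K K' : Fin (n+1) → ℝ) (Nz : ℝ)
    (N : Fin (n+1) → ℝ) (L z : ℝ) (x : Fin (n+1) → ℝ) : Prop :=
  Nz = z + K0 * z * (x 0 + ∑ j ∈ Finset.Ioi (0 : Fin (n+1)),
      (∏ l ∈ Finset.Iio j, (K l * x l)) * x j) + srlkSigma n K0 K z L x ∧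
  N 0 = x 0 + (∑ j ∈ Finset.Ioi (0 : Fin (n+1)),
        (∏ l ∈ Finset.Iio j, (K' l * x l)) * x j)
      + srlkDelta n K' L x
      + K0 * z * (x 0 + ∑ j ∈ Finset.Ioi (0 : Fin (n+1)),
        (∏ l ∈ Finset.Iio j, (K l * x l)) * x j)
      + srlkSigma n K0 K z L x ∧
  ∀ i : Fin (n+1), 0 < i →
    N i = x i + (∑ j ∈ Finset.Ici i,
        ((∏ l ∈ Finset.Iio j, (K' l * x l)) * x j
          + K0 * z * (∏ l ∈ Finset.Iio j, (K l * x l)) * x j))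
      + srlkDelta n K' L x + srlkSigma n K0 K z L x

/-- `f` is an algebraic function on `(0, ∞)`: it satisfies a monic polynomial equation
whose coefficients are rational functions with denominators nowhere vanishing on
`(0, ∞)`. -/
def AlgebraicOnIoi (f : ℝ → ℝ) : Prop :=
  ∃ m : ℕ, 1 ≤ m ∧ ∃ p q : Fin m → Polynomial ℝ,
    (∀ i : Fin m, ∀ L : ℝ, 0 < L → (q i).eval L ≠ 0) ∧
    ∀ L : ℝ, 0 < L →
      f L ^ m + ∑ i : Fin m, ((p i).eval L / (q i).eval L) * f L ^ (i : ℕ) = 0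

/-- An SRLK steady-state branch: continuous positive functions `z, x_1, …, x_{n+1}` on
`(0, ∞)` satisfying the SRLK steady-state equations for every `L > 0`, with
`z`, each `x_i`, `σ` and `δ` bounded and algebraic on `(0, ∞)`. -/
structure SRLKBranch (n : ℕ) (K0 : ℝ) (K K' : Fin (n+1) → ℝ) (Nz : ℝ)
    (N : Fin (n+1) → ℝ) (z : ℝ → ℝ) (x : Fin (n+1) → ℝ → ℝ) : Prop where
  contZ : ContinuousOn z (Set.Ioi 0)
  contX : ∀ i, ContinuousOn (x i) (Set.Ioi 0)
  posZ : ∀ L : ℝ, 0 < L → 0 < z L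
  posX : ∀ i, ∀ L : ℝ, 0 < L → 0 < x i L
  steady : ∀ L : ℝ, 0 < L → srlkSteady n K0 K K' Nz N L (z L) (fun i => x i L)
  bddZ : ∃ C : ℝ, ∀ L : ℝ, 0 < L → |z L| ≤ C
  bddX : ∀ i, ∃ C : ℝ, ∀ L : ℝ, 0 < L → |x i L| ≤ C
  bddSigma : ∃ C : ℝ, ∀ L : ℝ, 0 < L →
    |srlkSigma n K0 K (z L) L (fun i => x i L)| ≤ C
  bddDelta : ∃ C : ℝ, ∀ L : ℝ, 0 < L → |srlkDelta n K' L (fun i => x i L)| ≤ C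
  algZ : AlgebraicOnIoi z
  algX : ∀ i, AlgebraicOnIoi (x i)
  algSigma : AlgebraicOnIoi (fun L => srlkSigma n K0 K (z L) L (fun i => x i L))
  algDelta : AlgebraicOnIoi (fun L => srlkDelta n K' L (fun i => x i L))

/-!
A bounded algebraic function that is continuous on `(0, ∞)` converges at `+∞`: if
`liminf f < limsup f`, the intermediate value theorem makes every value `c` in between recur at
arbitrarily large `L`; then `L ↦ F(L, c)` vanishes identically for the polynomial relation
`F(L, f L) = 0`, so `c` is one of the finitely many roots of `F(1, ·)`.

Hence `z → c_z`, `x_i → ξ_i`, `σ → s` and `δ → d`. As `δ = L · Π K'_j x_j` stays bounded, some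
`ξ_j` vanishes. In the limit every `N_i` is `s + d` plus a nonnegative residual which is zero at
that `j`, so `min N_i = s + d`. The identity `σ · Π K'_j = K_0 z Π K_j · δ` passes to the limit as
`s Π K' = K_0 c_z Π K · d`, which splits `s + d` as claimed; and `c_z > 0`, since otherwise `s = 0`
and the kinase balance `N_z = z + K_0 z (…) + σ` would give `N_z = 0`.
-/

open Filter Polynomial Set Topology
open scoped Polynomial.Bivariate

theorem frequently_eq_of_frequently_lt_of_frequently_gt {f : ℝ → ℝ} {a c : ℝ}
    (hf : ContinuousOn f (Ioi a)) (hlt : ∃ᶠ L in atTop, f L < c)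
    (hgt : ∃ᶠ L in atTop, c < f L) : ∃ᶠ L in atTop, f L = c := by
  refine frequently_atTop.2 fun t => ?_
  obtain ⟨L₁, hL₁, hfL₁⟩ := frequently_atTop.1 hlt (max t (a + 1))
  obtain ⟨L₂, hL₂, hfL₂⟩ := frequently_atTop.1 hgt L₁
  have hsub : Icc L₁ L₂ ⊆ Ioi a := fun y hy =>
    lt_of_lt_of_le (by linarith [le_max_right t (a + 1)]) hy.1
  obtain ⟨L, hL, rfl⟩ := intermediate_value_Icc hL₂ (hf.mono hsub) ⟨hfL₁.le, hfL₂.le⟩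
  exact ⟨L, (le_max_left t _).trans (hL₁.trans hL.1), rfl⟩

theorem exists_tendsto_atTop_of_finite_setOf_frequently_eq {f : ℝ → ℝ} {a : ℝ}
    (hf : ContinuousOn f (Ioi a)) (hb : IsBoundedUnder (· ≤ ·) atTop fun L => |f L|)
    (hfin : {c | ∃ᶠ L in atTop, f L = c}.Finite) : ∃ ℓ, Tendsto f atTop (𝓝 ℓ) := by
  obtain ⟨hle, hge⟩ := isBoundedUnder_le_abs.1 hb
  refine ⟨limsup f atTop, tendsto_of_liminf_eq_limsup ?_ rfl hle hge⟩
  by_contra hne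
  have hlt : liminf f atTop < limsup f atTop := (liminf_le_limsup hle hge).lt_of_ne hne
  refine (Ioo_infinite hlt).mono (fun c hc => ?_) hfin
  exact frequently_eq_of_frequently_lt_of_frequently_gt hf
    (frequently_lt_of_liminf_lt hle.isCoboundedUnder_ge hc.1)
    (frequently_lt_of_lt_limsup hge.isCoboundedUnder_le hc.2)

theorem Polynomial.eq_zero_of_frequently_isRoot {p : ℝ[X]}
    (h : ∃ᶠ L in atTop, p.IsRoot L) : p = 0 := by
  by_contra hp
  exact h (eventually_atTop_not_isRoot p hp)

theorem finite_setOf_frequently_eq_of_evalEval {f : ℝ → ℝ} (F : ℝ[X][Y]) {L₀ : ℝ}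
    (hF : F.map (evalRingHom L₀) ≠ 0) (hfF : ∀ᶠ L in atTop, F.evalEval L (f L) = 0) :
    {c | ∃ᶠ L in atTop, f L = c}.Finite := by
  refine (finite_setOfPred_isRoot hF).subset fun c hc => ?_
  have hroot : F.eval (C c) = 0 := eq_zero_of_frequently_isRoot <|
    (hc.and_eventually hfF).mono fun L ⟨hfL, hL⟩ => by rwa [hfL] at hL
  simp only [mem_ofPred_eq, IsRoot, eval_map, eval₂_evalRingHom, evalEval, hroot, eval_zero]

theorem AlgebraicOnIoi.exists_evalEval_eq_zero {f : ℝ → ℝ} (hf : AlgebraicOnIoi f) :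
    ∃ F : ℝ[X][Y], F.map (evalRingHom 1) ≠ 0 ∧ ∀ L, 0 < L → F.evalEval L (f L) = 0 := by
  obtain ⟨m, -, p, q, hq, hpq⟩ := hf
  set Q : ℝ[X] := ∏ i, q i
  have hQ : ∀ L, 0 < L → Q.eval L ≠ 0 := fun L hL => by
    simpa only [Q, eval_prod] using Finset.prod_ne_zero_iff.2 fun i _ => hq i L hL
  let F : ℝ[X][Y] :=
    C Q * Y ^ m + ∑ i : Fin m, C (p i * ∏ j ∈ Finset.univ.erase i, q j) * Y ^ (i : ℕ)
  refine ⟨F, fun h => hQ 1 one_pos ?_, fun L hL => ?_⟩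
  · have hcoeff := congrArg (coeff · m) h
    simpa only [F, coeff_map, coeff_add, finsetSum_coeff, coeff_C_mul_X_pow, if_true,
      (fun i : Fin m => (i.isLt.ne' : m ≠ i)), if_false, Finset.sum_const_zero, add_zero,
      coe_evalRingHom, coeff_zero] using hcoeff
  · have hterm : ∀ i : Fin m, (p i * ∏ j ∈ Finset.univ.erase i, q j).eval L =
        Q.eval L * ((p i).eval L / (q i).eval L) := fun i => by
      rw [show Q = q i * ∏ j ∈ Finset.univ.erase i, q j from
        (Finset.mul_prod_erase _ _ (Finset.mem_univ i)).symm, eval_mul, eval_mul]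
      field_simp [hq i L hL]
    simp only [F, evalEval_add, evalEval_mul, evalEval_C, evalEval_pow, evalEval_X,
      evalEval_finsetSum, hterm, mul_assoc, ← Finset.mul_sum, ← mul_add, hpq L hL, mul_zero]

theorem AlgebraicOnIoi.finite_setOf_frequently_eq {f : ℝ → ℝ} (hf : AlgebraicOnIoi f) :
    {c | ∃ᶠ L in atTop, f L = c}.Finite := by
  obtain ⟨F, hF, hfF⟩ := hf.exists_evalEval_eq_zero
  exact finite_setOf_frequently_eq_of_evalEval F hF ((eventually_gt_atTop 0).mono hfF)

theorem AlgebraicOnIoi.exists_tendsto_atTop {f : ℝ → ℝ} (hf : AlgebraicOnIoi f)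
    (hc : ContinuousOn f (Ioi 0)) (hb : ∃ C, ∀ L, 0 < L → |f L| ≤ C) :
    ∃ ℓ, Tendsto f atTop (𝓝 ℓ) := by
  obtain ⟨C, hC⟩ := hb
  exact exists_tendsto_atTop_of_finite_setOf_frequently_eq hc
    ⟨C, eventually_map.2 ((eventually_gt_atTop 0).mono hC)⟩ hf.finite_setOf_frequently_eq

theorem eq_zero_of_tendsto_of_tendsto_id_mul {g : ℝ → ℝ} {a d : ℝ}
    (hg : Tendsto g atTop (𝓝 a)) (hd : Tendsto (fun L => L * g L) atTop (𝓝 d)) : a = 0 := by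
  refine tendsto_nhds_unique hg ?_
  simpa only [mul_zero] using (hd.mul tendsto_inv_atTop_zero).congr'
    ((eventually_ne_atTop 0).mono fun L hL => by field_simp)

section ChainSum

variable {m : ℕ} (K x : Fin m → ℝ)

def chainSum (i : Fin m) : ℝ :=
  ∑ j ∈ Finset.Ici i, (∏ l ∈ Finset.Iio j, (K l * x l)) * x j

theorem chainSum_nonneg (hK : ∀ l, 0 ≤ K l) (hx : ∀ l, 0 ≤ x l) (i : Fin m) :
    0 ≤ chainSum K x i :=
  Finset.sum_nonneg fun j _ =>
    mul_nonneg (Finset.prod_nonneg fun l _ => mul_nonneg (hK l) (hx l)) (hx j)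

theorem chainSum_eq_zero {i : Fin m} (hi : x i = 0) : chainSum K x i = 0 := by
  refine Finset.sum_eq_zero fun j hj => ?_
  rcases (Finset.mem_Ici.1 hj).eq_or_lt with rfl | hij
  · rw [hi, mul_zero]
  · rw [Finset.prod_eq_zero (Finset.mem_Iio.2 hij) (by rw [hi, mul_zero]), zero_mul]

theorem continuous_chainSum (i : Fin m) : Continuous fun x => chainSum K x i := by
  unfold chainSum; fun_prop

end ChainSum

theorem chainSum_zero {n : ℕ} (K x : Fin (n + 1) → ℝ) :
    chainSum K x 0 = x 0 + ∑ j ∈ Finset.Ioi 0, (∏ l ∈ Finset.Iio j, (K l * x l)) * x j := by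
  rw [chainSum, Finset.Ici_eq_cons_Ioi, Finset.sum_cons, ← bot_eq_zero, Finset.Iio_bot,
    Finset.prod_empty, one_mul]

/-- The copies of `X_i` outside the two complete complexes, so that `N_i = R_i + δ + σ`. -/
def srlkResidual {n : ℕ} (K0 : ℝ) (K K' : Fin (n + 1) → ℝ) (z : ℝ) (x : Fin (n + 1) → ℝ)
    (i : Fin (n + 1)) : ℝ :=
  (if i = 0 then 0 else x i) + chainSum K' x i + K0 * z * chainSum K x i

section Residual

variable {n : ℕ} {K0 : ℝ} {K K' : Fin (n + 1) → ℝ} {z : ℝ} {x : Fin (n + 1) → ℝ}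

theorem srlkResidual_nonneg (hK0 : 0 ≤ K0) (hK : ∀ l, 0 ≤ K l) (hK' : ∀ l, 0 ≤ K' l)
    (hz : 0 ≤ z) (hx : ∀ l, 0 ≤ x l) (i : Fin (n + 1)) : 0 ≤ srlkResidual K0 K K' z x i := by
  unfold srlkResidual
  have : 0 ≤ if i = 0 then 0 else x i := by split_ifs <;> simp [hx]
  have := chainSum_nonneg K' x hK' hx i
  have := chainSum_nonneg K x hK hx i
  positivity

theorem srlkResidual_eq_zero {i : Fin (n + 1)} (hi : x i = 0) :
    srlkResidual K0 K K' z x i = 0 := by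
  simp [srlkResidual, chainSum_eq_zero _ _ hi, hi]

theorem continuous_srlkResidual (K0 : ℝ) (K K' : Fin (n + 1) → ℝ) (i : Fin (n + 1)) :
    Continuous fun p : ℝ × (Fin (n + 1) → ℝ) => srlkResidual K0 K K' p.1 p.2 i := by
  have := continuous_chainSum K
  have := continuous_chainSum K'
  unfold srlkResidual; split_ifs <;> fun_prop

end Residual

section Steady

variable {n : ℕ} {K0 : ℝ} {K K' : Fin (n + 1) → ℝ} {Nz : ℝ} {N : Fin (n + 1) → ℝ} {L z : ℝ}
  {x : Fin (n + 1) → ℝ}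

theorem srlkSteady.total_kinase_eq (h : srlkSteady n K0 K K' Nz N L z x) :
    Nz = z + K0 * z * chainSum K x 0 + srlkSigma n K0 K z L x := by
  rw [chainSum_zero]; exact h.1

theorem srlkSteady.total_chain_eq (h : srlkSteady n K0 K K' Nz N L z x) (i : Fin (n + 1)) :
    N i = srlkResidual K0 K K' z x i + srlkDelta n K' L x + srlkSigma n K0 K z L x := by
  rcases (Fin.zero_le i).eq_or_lt with rfl | hi
  · rw [h.2.1, srlkResidual, if_pos rfl, chainSum_zero, chainSum_zero]; ring
  · rw [h.2.2 i hi, srlkResidual, if_neg hi.ne', chainSum, chainSum, Finset.sum_add_distrib,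
      Finset.mul_sum]
    simp only [mul_assoc]; ring

end Steady

theorem srlkSigma_mul_prod {n : ℕ} (K0 : ℝ) (K K' : Fin (n + 1) → ℝ) (z L : ℝ)
    (x : Fin (n + 1) → ℝ) :
    srlkSigma n K0 K z L x * ∏ i, K' i = K0 * z * (∏ i, K i) * srlkDelta n K' L x := by
  simp only [srlkSigma, srlkDelta, Finset.prod_mul_distrib]; ring

theorem limit_sigma_mul_prod {n : ℕ} {K0 : ℝ} {K K' : Fin (n + 1) → ℝ} {z : ℝ → ℝ}
    {x : Fin (n + 1) → ℝ → ℝ} {cz s d : ℝ} (hz : Tendsto z atTop (𝓝 cz))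
    (hσ : Tendsto (fun L => srlkSigma n K0 K (z L) L fun i => x i L) atTop (𝓝 s))
    (hδ : Tendsto (fun L => srlkDelta n K' L fun i => x i L) atTop (𝓝 d)) :
    s * ∏ i, K' i = K0 * cz * (∏ i, K i) * d :=
  tendsto_nhds_unique_of_eventuallyEq (hσ.mul_const _)
    (((tendsto_const_nhds.mul hz).mul_const _).mul hδ)
    (Eventually.of_forall fun L => srlkSigma_mul_prod K0 K K' (z L) L _)

theorem exists_limit_x_eq_zero {n : ℕ} {K' : Fin (n + 1) → ℝ} {x : Fin (n + 1) → ℝ → ℝ}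
    {ξ : Fin (n + 1) → ℝ} {d : ℝ} (hK' : ∀ i, K' i ≠ 0)
    (hx : ∀ i, Tendsto (x i) atTop (𝓝 (ξ i)))
    (hδ : Tendsto (fun L => srlkDelta n K' L fun i => x i L) atTop (𝓝 d)) : ∃ j, ξ j = 0 := by
  have hprod : ∏ j, (K' j * ξ j) = 0 := eq_zero_of_tendsto_of_tendsto_id_mul
    (tendsto_finsetProd _ fun j _ => (hx j).const_mul (K' j)) hδ
  obtain ⟨j, -, hj⟩ := Finset.prod_eq_zero_iff.1 hprod
  exact ⟨j, (mul_eq_zero.1 hj).resolve_left (hK' j)⟩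

namespace SRLKBranch

variable {n : ℕ} {K0 : ℝ} {K K' : Fin (n + 1) → ℝ} {Nz : ℝ} {N : Fin (n + 1) → ℝ}
  {z : ℝ → ℝ} {x : Fin (n + 1) → ℝ → ℝ}

theorem continuousOn_sigma (hbr : SRLKBranch n K0 K K' Nz N z x) :
    ContinuousOn (fun L => srlkSigma n K0 K (z L) L fun i => x i L) (Ioi 0) := by
  have := hbr.contZ
  have := hbr.contX
  unfold srlkSigma; fun_prop

theorem continuousOn_delta (hbr : SRLKBranch n K0 K K' Nz N z x) :
    ContinuousOn (fun L => srlkDelta n K' L fun i => x i L) (Ioi 0) := by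
  have := hbr.contX
  unfold srlkDelta; fun_prop

variable {cz s d : ℝ} {ξ : Fin (n + 1) → ℝ}

theorem limit_z_nonneg (hbr : SRLKBranch n K0 K K' Nz N z x) (hz : Tendsto z atTop (𝓝 cz)) :
    0 ≤ cz :=
  ge_of_tendsto hz <| (eventually_gt_atTop 0).mono fun L hL => (hbr.posZ L hL).le

theorem limit_x_nonneg (hbr : SRLKBranch n K0 K K' Nz N z x)
    (hx : ∀ i, Tendsto (x i) atTop (𝓝 (ξ i))) (i : Fin (n + 1)) : 0 ≤ ξ i :=
  ge_of_tendsto (hx i) <| (eventually_gt_atTop 0).mono fun L hL => (hbr.posX i L hL).le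

theorem total_kinase_eq_limit (hbr : SRLKBranch n K0 K K' Nz N z x)
    (hz : Tendsto z atTop (𝓝 cz)) (hx : ∀ i, Tendsto (x i) atTop (𝓝 (ξ i)))
    (hσ : Tendsto (fun L => srlkSigma n K0 K (z L) L fun i => x i L) atTop (𝓝 s)) :
    Nz = cz + K0 * cz * chainSum K ξ 0 + s := by
  have hchain := ((continuous_chainSum K 0).tendsto ξ).comp (tendsto_pi_nhds.2 hx)
  refine tendsto_nhds_unique_of_eventuallyEq tendsto_const_nhds
    ((hz.add ((tendsto_const_nhds.mul hz).mul hchain)).add hσ) ?_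
  exact (eventually_gt_atTop 0).mono fun L hL => (hbr.steady L hL).total_kinase_eq

theorem total_chain_eq_limit (hbr : SRLKBranch n K0 K K' Nz N z x)
    (hz : Tendsto z atTop (𝓝 cz)) (hx : ∀ i, Tendsto (x i) atTop (𝓝 (ξ i)))
    (hσ : Tendsto (fun L => srlkSigma n K0 K (z L) L fun i => x i L) atTop (𝓝 s))
    (hδ : Tendsto (fun L => srlkDelta n K' L fun i => x i L) atTop (𝓝 d)) (i : Fin (n + 1)) :
    N i = srlkResidual K0 K K' cz ξ i + d + s := by
  have hres := ((continuous_srlkResidual K0 K K' i).tendsto (cz, ξ)).comp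
    (hz.prodMk_nhds (tendsto_pi_nhds.2 hx))
  refine tendsto_nhds_unique_of_eventuallyEq tendsto_const_nhds ((hres.add hδ).add hσ) ?_
  exact (eventually_gt_atTop 0).mono fun L hL => (hbr.steady L hL).total_chain_eq i

theorem limit_z_pos (hbr : SRLKBranch n K0 K K' Nz N z x) (hK' : ∀ i, K' i ≠ 0) (hNz : Nz ≠ 0)
    (hz : Tendsto z atTop (𝓝 cz)) (hx : ∀ i, Tendsto (x i) atTop (𝓝 (ξ i)))
    (hσ : Tendsto (fun L => srlkSigma n K0 K (z L) L fun i => x i L) atTop (𝓝 s))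
    (hδ : Tendsto (fun L => srlkDelta n K' L fun i => x i L) atTop (𝓝 d)) : 0 < cz := by
  refine (hbr.limit_z_nonneg hz).lt_of_ne fun hcz => hNz ?_
  have hs : s = 0 := by
    have hratio := limit_sigma_mul_prod hz hσ hδ
    rw [← hcz, mul_zero, zero_mul, zero_mul] at hratio
    exact (mul_eq_zero.1 hratio).resolve_right (Finset.prod_ne_zero_iff.2 fun i _ => hK' i)
  rw [hbr.total_kinase_eq_limit hz hx hσ, ← hcz, hs]; ring

theorem inf'_eq_limit_add_limit (hbr : SRLKBranch n K0 K K' Nz N z x) (hK0 : 0 ≤ K0)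
    (hK : ∀ i, 0 ≤ K i) (hK' : ∀ i, 0 < K' i)
    (hz : Tendsto z atTop (𝓝 cz)) (hx : ∀ i, Tendsto (x i) atTop (𝓝 (ξ i)))
    (hσ : Tendsto (fun L => srlkSigma n K0 K (z L) L fun i => x i L) atTop (𝓝 s))
    (hδ : Tendsto (fun L => srlkDelta n K' L fun i => x i L) atTop (𝓝 d)) :
    Finset.univ.inf' Finset.univ_nonempty N = s + d := by
  obtain ⟨j, hj⟩ := exists_limit_x_eq_zero (fun i => (hK' i).ne') hx hδ
  have hN := hbr.total_chain_eq_limit hz hx hσ hδ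
  refine le_antisymm ((Finset.inf'_le N (Finset.mem_univ j)).trans_eq ?_)
    (Finset.le_inf' _ _ fun i _ => ?_)
  · rw [hN j, srlkResidual_eq_zero hj]; ring
  · have := srlkResidual_nonneg hK0 hK (fun i => (hK' i).le) (hbr.limit_z_nonneg hz)
      (hbr.limit_x_nonneg hx) i
    rw [hN i]; linarith

end SRLKBranch

theorem srlk_sigma_delta_explicit_limits_general
    (n : ℕ) (K0 : ℝ) (K K' : Fin (n+1) → ℝ) (Nz : ℝ) (N : Fin (n+1) → ℝ)
    (hK0 : 0 < K0) (hK : ∀ i, 0 < K i) (hK' : ∀ i, 0 < K' i)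
    (hNz : 0 < Nz)
    (z : ℝ → ℝ) (x : Fin (n+1) → ℝ → ℝ)
    (hbr : SRLKBranch n K0 K K' Nz N z x) :
    ∃ cz : ℝ, 0 < cz ∧ Filter.Tendsto z Filter.atTop (nhds cz) ∧
      Filter.Tendsto (fun L => srlkSigma n K0 K (z L) L (fun i => x i L))
        Filter.atTop
        (nhds ((K0 * cz * ∏ i, K i) / ((∏ i, K' i) + K0 * cz * ∏ i, K i)
          * Finset.univ.inf' Finset.univ_nonempty N)) ∧
      Filter.Tendsto (fun L => srlkDelta n K' L (fun i => x i L))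
        Filter.atTop
        (nhds ((∏ i, K' i) / ((∏ i, K' i) + K0 * cz * ∏ i, K i)
          * Finset.univ.inf' Finset.univ_nonempty N)) := by
  obtain ⟨cz, hz⟩ := hbr.algZ.exists_tendsto_atTop hbr.contZ hbr.bddZ
  choose ξ hx using fun i => (hbr.algX i).exists_tendsto_atTop (hbr.contX i) (hbr.bddX i)
  obtain ⟨s, hσ⟩ := hbr.algSigma.exists_tendsto_atTop hbr.continuousOn_sigma hbr.bddSigma
  obtain ⟨d, hδ⟩ := hbr.algDelta.exists_tendsto_atTop hbr.continuousOn_delta hbr.bddDelta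
  have hcz := hbr.limit_z_pos (fun i => (hK' i).ne') hNz.ne' hz hx hσ hδ
  have hratio := limit_sigma_mul_prod hz hσ hδ
  have hmin := hbr.inf'_eq_limit_add_limit hK0.le (fun i => (hK i).le) hK' hz hx hσ hδ
  have hden : 0 < (∏ i, K' i) + K0 * cz * ∏ i, K i := by
    have := Finset.prod_pos (s := Finset.univ) fun i _ => hK i
    have := Finset.prod_pos (s := Finset.univ) fun i _ => hK' i
    positivity
  refine ⟨cz, hcz, hz, ?_, ?_⟩
  · convert hσ using 2
    rw [hmin]; field_simp; linear_combination -hratio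
  · convert hδ using 2
    rw [hmin]; field_simp; linear_combination hratio

/-- along any SRLK steady-state branch, with `N° = min_i N_i` the
common copy number of the limiting components, `z → c_z > 0` and the signalling and
dummy functions converge to the stated explicit limits as `L → +∞`. -/
theorem srlk_sigma_delta_explicit_limits
    (n : ℕ) (K0 : ℝ) (K K' : Fin (n+1) → ℝ) (Nz : ℝ) (N : Fin (n+1) → ℝ)
    (hK0 : 0 < K0) (hK : ∀ i, 0 < K i) (hK' : ∀ i, 0 < K' i)
    (hNz : 0 < Nz) (hN : ∀ i, 0 < N i)
    (z : ℝ → ℝ) (x : Fin (n+1) → ℝ → ℝ)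
    (hbr : SRLKBranch n K0 K K' Nz N z x) :
    ∃ cz : ℝ, 0 < cz ∧ Filter.Tendsto z Filter.atTop (nhds cz) ∧
      Filter.Tendsto (fun L => srlkSigma n K0 K (z L) L (fun i => x i L))
        Filter.atTop
        (nhds ((K0 * cz * ∏ i, K i) / ((∏ i, K' i) + K0 * cz * ∏ i, K i)
          * Finset.univ.inf' Finset.univ_nonempty N)) ∧
      Filter.Tendsto (fun L => srlkDelta n K' L (fun i => x i L))
        Filter.atTop
        (nhds ((∏ i, K' i) / ((∏ i, K' i) + K0 * cz * ∏ i, K i)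
          * Finset.univ.inf' Finset.univ_nonempty N)) :=
  srlk_sigma_delta_explicit_limits_general n K0 K K' Nz N hK0 hK hK' hNz z x hbr
end

section
/- Consider an SRLK steady-state branch with no allostery, i.e. K_i = K_i' for all i = 1, …, n. Then the signalling function σ converges to a finite limit c as L → +∞, and σ(L) ≤ c for every L > 0; in other words, the supremum of σ over (0, ∞) equals lim_{L→+∞} σ(L). -/
/-!
With no allostery the ligand-bound complexes enter every conservation law of the `X_i` in
the same way as the free chain. Writing `P_j = Π_{l<j} K_l x_l` and `R_i = Σ_{j ≥ i} P_j x_j + δ`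
(so that `δ = L P_{n+1}`), the laws become `N_z = z + K_0 z R_1`, `N_1 = (1 + K_0 z) R_1` and
`N_i = x_i + (1 + K_0 z) R_i` for `i ≥ 2`, while `σ = K_0 z δ`. The first two laws force `z`,
hence `R_1`, to be constant along the branch. Comparing two ligand concentrations `L₁ ≤ L₂`,
an inequality between the `R_2` propagates down the chain, giving either `δ(L₁) ≤ δ(L₂)`
directly or `P_{n+1}(L₁) ≤ P_{n+1}(L₂)`, and then `δ = L P_{n+1}` gives the same conclusion.
So `σ` is monotone and bounded, and increases to its limit.
-/

open Filter Finset Set Topology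

section

open Fin.NatCast

theorem Fin.prod_Iio_eq_prod_range {M : Type*} [CommMonoid M] {n : ℕ} (f : Fin (n + 1) → M)
    (j : Fin (n + 1)) : ∏ l ∈ Finset.Iio j, f l = ∏ m ∈ range j, f (m : Fin (n + 1)) := by
  rw [← Nat.Iio_eq_range, ← Fin.map_valEmbedding_Iio, prod_map]
  simp

theorem Fin.sum_Ici_eq_sum_Ico {M : Type*} [AddCommMonoid M] {n : ℕ} (f : Fin (n + 1) → M)
    (i : Fin (n + 1)) :
    ∑ j ∈ Finset.Ici i, f j = ∑ m ∈ Finset.Ico (i : ℕ) (n + 1), f (m : Fin (n + 1)) := by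
  rw [← Fin.map_valEmbedding_Ici, sum_map]
  simp

end

theorem MonotoneOn.exists_tendsto_atTop_of_bddAbove_Ioi {f : ℝ → ℝ} {a : ℝ}
    (hf : MonotoneOn f (Ioi a)) (hb : BddAbove (f '' Ioi a)) :
    ∃ c, Tendsto f atTop (𝓝 c) ∧ ∀ L, a < L → f L ≤ c := by
  have hmem : ∀ L, max L (a + 1) ∈ Ioi a := fun L => lt_max_of_lt_right (lt_add_one a)
  set g := fun L => f (max L (a + 1))
  have hg : Monotone g := fun L₁ L₂ h => hf (hmem L₁) (hmem L₂) (max_le_max_right _ h)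
  have hgb : BddAbove (range g) :=
    hb.mono (range_subset_iff.2 fun L => mem_image_of_mem f (hmem L))
  refine ⟨⨆ L, g L, (tendsto_atTop_ciSup hg hgb).congr' ?_, fun L hL => ?_⟩
  · filter_upwards [eventually_ge_atTop (a + 1)] with L hL
    simp only [g, max_eq_left hL]
  · exact (hf hL (hmem L) (le_max_left _ _)).trans (le_ciSup hgb L)

theorem eq_of_conservation_laws {K₀ N₀ Nz a b r s : ℝ} (hK₀ : 0 ≤ K₀) (hb : 0 ≤ b) (hr : 0 ≤ r)
    (hza : Nz = a + K₀ * a * r) (h₀a : N₀ = (1 + K₀ * a) * r)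
    (hzb : Nz = b + K₀ * b * s) (h₀b : N₀ = (1 + K₀ * b) * s) : a = b := by
  have hrs : s - r = b - a := by linear_combination hzb - h₀b - hza + h₀a
  have key : (b - a) * (1 + K₀ * b + K₀ * r) = 0 := by
    linear_combination h₀a - h₀b - (1 + K₀ * b) * hrs
  have hpos : 0 < 1 + K₀ * b + K₀ * r := by
    linarith [mul_nonneg hK₀ hb, mul_nonneg hK₀ hr]
  linarith [(mul_eq_zero.1 key).resolve_right hpos.ne']

namespace SRLK

variable (n : ℕ) (k : ℕ → ℝ)

def chainProd (y : ℕ → ℝ) (j : ℕ) : ℝ := ∏ l ∈ range j, k l * y l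

def chainTail (y : ℕ → ℝ) (d : ℝ) (i : ℕ) : ℝ :=
  ∑ j ∈ Ico i (n + 1), chainProd k y j * y j + d

variable {n k}

theorem chainProd_zero (y : ℕ → ℝ) : chainProd k y 0 = 1 := by simp [chainProd]

theorem chainProd_succ (y : ℕ → ℝ) (j : ℕ) :
    chainProd k y (j + 1) = chainProd k y j * (k j * y j) :=
  prod_range_succ _ _

theorem chainProd_nonneg {y : ℕ → ℝ} (hk : ∀ l, 0 ≤ k l) (hy : ∀ l, 0 ≤ y l) (j : ℕ) :
    0 ≤ chainProd k y j :=
  prod_nonneg fun l _ => mul_nonneg (hk l) (hy l)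

theorem chainTail_nonneg {y : ℕ → ℝ} {d : ℝ} (hk : ∀ l, 0 ≤ k l) (hy : ∀ l, 0 ≤ y l)
    (hd : 0 ≤ d) (i : ℕ) : 0 ≤ chainTail n k y d i :=
  add_nonneg (sum_nonneg fun j _ => mul_nonneg (chainProd_nonneg hk hy j) (hy j)) hd

theorem chainTail_succ_self (y : ℕ → ℝ) (d : ℝ) : chainTail n k y d (n + 1) = d := by
  simp [chainTail]

theorem chainTail_eq_add_chainTail_succ (y : ℕ → ℝ) (d : ℝ) {i : ℕ} (hi : i ≤ n) :
    chainTail n k y d i = chainProd k y i * y i + chainTail n k y d (i + 1) := by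
  rw [chainTail, chainTail, sum_eq_sum_Ico_succ_bot (by omega), add_assoc]

theorem chainTail_zero (y : ℕ → ℝ) (d : ℝ) :
    chainTail n k y d 0 = y 0 + chainTail n k y d 1 := by
  rw [chainTail_eq_add_chainTail_succ y d (Nat.zero_le n), chainProd_zero, one_mul]

theorem chainTail_le_and_chainProd_ge {c d₁ d₂ : ℝ} {y₁ y₂ : ℕ → ℝ}
    (hk : ∀ l, 0 ≤ k l) (hy₁ : ∀ l, 0 ≤ y₁ l) (hy₂ : ∀ l, 0 ≤ y₂ l) (hc : 0 ≤ c)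
    (h₀ : chainTail n k y₁ d₁ 0 = chainTail n k y₂ d₂ 0)
    (he : ∀ m, 1 ≤ m → m ≤ n →
      y₁ m + c * chainTail n k y₁ d₁ m = y₂ m + c * chainTail n k y₂ d₂ m)
    (h₁ : chainTail n k y₁ d₁ 1 ≤ chainTail n k y₂ d₂ 1) {m : ℕ} (hm : 1 ≤ m)
    (hmn : m ≤ n + 1) :
    chainTail n k y₁ d₁ m ≤ chainTail n k y₂ d₂ m ∧ chainProd k y₂ m ≤ chainProd k y₁ m := by
  induction m, hm using Nat.le_induction with
  | base =>
    have hR₀ := h₀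
    rw [chainTail_zero, chainTail_zero] at hR₀
    refine ⟨h₁, ?_⟩
    simp only [chainProd_succ, chainProd_zero, one_mul]
    exact mul_le_mul_of_nonneg_left (by linarith) (hk 0)
  | succ m hm ih =>
    obtain ⟨hR, hP⟩ := ih (by omega)
    have hy : y₂ m ≤ y₁ m := by
      linarith [he m hm (by omega), mul_le_mul_of_nonneg_left hR hc]
    have hPy : chainProd k y₂ m * y₂ m ≤ chainProd k y₁ m * y₁ m :=
      mul_le_mul hP hy (hy₂ m) (chainProd_nonneg hk hy₁ m)
    have hmn' : m ≤ n := by omega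
    rw [chainTail_eq_add_chainTail_succ _ _ hmn', chainTail_eq_add_chainTail_succ _ _ hmn'] at hR
    constructor
    · linarith
    · rw [chainProd_succ, chainProd_succ]
      exact mul_le_mul hP (mul_le_mul_of_nonneg_left hy (hk m))
        (mul_nonneg (hk m) (hy₂ m)) (chainProd_nonneg hk hy₁ m)

theorem chain_end_le {c L₁ L₂ d₁ d₂ : ℝ} {y₁ y₂ : ℕ → ℝ}
    (hk : ∀ l, 0 ≤ k l) (hy₁ : ∀ l, 0 ≤ y₁ l) (hy₂ : ∀ l, 0 ≤ y₂ l) (hc : 0 ≤ c)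
    (h₀ : chainTail n k y₁ d₁ 0 = chainTail n k y₂ d₂ 0)
    (he : ∀ m, 1 ≤ m → m ≤ n →
      y₁ m + c * chainTail n k y₁ d₁ m = y₂ m + c * chainTail n k y₂ d₂ m)
    (hL₁ : 0 ≤ L₁) (hL : L₁ ≤ L₂)
    (hd₁ : d₁ = L₁ * chainProd k y₁ (n + 1)) (hd₂ : d₂ = L₂ * chainProd k y₂ (n + 1)) :
    d₁ ≤ d₂ := by
  rcases le_total (chainTail n k y₁ d₁ 1) (chainTail n k y₂ d₂ 1) with h₁ | h₁
  · have := (chainTail_le_and_chainProd_ge hk hy₁ hy₂ hc h₀ he h₁ le_add_self le_rfl).1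
    rwa [chainTail_succ_self, chainTail_succ_self] at this
  · have hP := (chainTail_le_and_chainProd_ge hk hy₂ hy₁ hc h₀.symm
      (fun m h1 h2 => (he m h1 h2).symm) h₁ le_add_self le_rfl).2
    rw [hd₁, hd₂]
    exact mul_le_mul hL hP (chainProd_nonneg hk hy₁ _) (hL₁.trans hL)

end SRLK

section Model

open SRLK Fin.NatCast

variable {n : ℕ} {K₀ z L Nz : ℝ} {K x N : Fin (n + 1) → ℝ}

-- `(m : Fin (n + 1))` wraps around modulo `n + 1`; the chain only reads indices `m ≤ n`.
def srlkTail (n : ℕ) (K : Fin (n + 1) → ℝ) (L : ℝ) (x : Fin (n + 1) → ℝ) (i : ℕ) : ℝ :=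
  chainTail n (fun m : ℕ => K m) (fun m : ℕ => x m) (srlkDelta n K L x) i

theorem srlkDelta_eq_chainProd :
    srlkDelta n K L x = L * chainProd (fun m : ℕ => K m) (fun m : ℕ => x m) (n + 1) := by
  rw [srlkDelta, chainProd, ← Fin.prod_univ_eq_prod_range]
  simp

theorem srlkSigma_eq_mul_srlkDelta : srlkSigma n K₀ K z L x = K₀ * z * srlkDelta n K L x := by
  simp only [srlkSigma, srlkDelta]
  ring

theorem srlkTail_nonneg (hK : ∀ i, 0 ≤ K i) (hx : ∀ i, 0 ≤ x i) (hL : 0 ≤ L) (i : ℕ) :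
    0 ≤ srlkTail n K L x i :=
  chainTail_nonneg (fun _ => hK _) (fun _ => hx _)
    (mul_nonneg hL (prod_nonneg fun j _ => mul_nonneg (hK j) (hx j))) i

theorem srlkSteady.conservation_laws (h : srlkSteady n K₀ K K Nz N L z x) :
    Nz = z + K₀ * z * srlkTail n K L x 0 ∧ N 0 = (1 + K₀ * z) * srlkTail n K L x 0 ∧
      ∀ m : ℕ, 1 ≤ m → m ≤ n → N m = x m + (1 + K₀ * z) * srlkTail n K L x m := by
  obtain ⟨hz, h₀, hi⟩ := h
  have hS : ∀ i : Fin (n + 1), ∑ j ∈ Finset.Ici i, (∏ l ∈ Finset.Iio j, K l * x l) * x j =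
      srlkTail n K L x i - srlkDelta n K L x := by
    intro i
    rw [Fin.sum_Ici_eq_sum_Ico, srlkTail, chainTail, add_sub_cancel_right]
    refine sum_congr rfl fun m hm => ?_
    rw [Fin.prod_Iio_eq_prod_range, Fin.val_cast_of_lt (Finset.mem_Ico.1 hm).2]
    rfl
  have hhead : x 0 + ∑ j ∈ Finset.Ioi 0, (∏ l ∈ Finset.Iio j, K l * x l) * x j =
      srlkTail n K L x 0 - srlkDelta n K L x := by
    have h := hS 0
    rwa [← Finset.Ioi_insert, sum_insert Finset.notMem_Ioi_self, Fin.val_zero,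
      Finset.Iio_eq_empty.2 fun b _ => Fin.zero_le b, Finset.prod_empty, one_mul] at h
  rw [srlkSigma_eq_mul_srlkDelta, hhead] at hz h₀
  refine ⟨by linear_combination hz, by linear_combination h₀, fun m hm hmn => ?_⟩
  have hm' : ((m : Fin (n + 1)) : ℕ) = m := Fin.val_cast_of_lt (by omega)
  have hi' := hi m (by rw [Fin.lt_def, hm', Fin.val_zero]; omega)
  simp only [mul_assoc, sum_add_distrib, ← mul_sum, hS, hm', srlkSigma_eq_mul_srlkDelta] at hi'
  linear_combination hi'

end Model

section Branch

variable {n : ℕ} {K₀ Nz : ℝ} {K N : Fin (n + 1) → ℝ} {z : ℝ → ℝ} {x : Fin (n + 1) → ℝ → ℝ}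

theorem SRLKBranch.z_eq (hK₀ : 0 < K₀) (hK : ∀ i, 0 < K i)
    (hbr : SRLKBranch n K₀ K K Nz N z x) {L₁ L₂ : ℝ} (h₁ : 0 < L₁) (h₂ : 0 < L₂) :
    z L₁ = z L₂ := by
  obtain ⟨hz₁, h0₁, -⟩ := srlkSteady.conservation_laws (hbr.steady L₁ h₁)
  obtain ⟨hz₂, h0₂, -⟩ := srlkSteady.conservation_laws (hbr.steady L₂ h₂)
  have hR : ∀ L, 0 < L → 0 ≤ srlkTail n K L (fun i => x i L) 0 := fun L hL =>
    srlkTail_nonneg (fun i => (hK i).le) (fun i => (hbr.posX i L hL).le) hL.le 0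
  exact eq_of_conservation_laws hK₀.le (hbr.posZ L₂ h₂).le (hR L₁ h₁) hz₁ h0₁ hz₂ h0₂

theorem SRLKBranch.monotoneOn_delta (hK₀ : 0 < K₀) (hK : ∀ i, 0 < K i)
    (hbr : SRLKBranch n K₀ K K Nz N z x) :
    MonotoneOn (fun L => srlkDelta n K L fun i => x i L) (Ioi 0) := by
  intro L₁ h₁ L₂ h₂ hL
  dsimp only
  obtain ⟨-, h0₁, hi₁⟩ := srlkSteady.conservation_laws (hbr.steady L₁ h₁)
  obtain ⟨-, h0₂, hi₂⟩ := srlkSteady.conservation_laws (hbr.steady L₂ h₂)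
  rw [hbr.z_eq hK₀ hK h₂ h₁] at h0₂ hi₂
  have hc : 0 < 1 + K₀ * z L₁ := add_pos one_pos (mul_pos hK₀ (hbr.posZ L₁ h₁))
  exact SRLK.chain_end_le (fun _ => (hK _).le) (fun _ => (hbr.posX _ L₁ h₁).le)
    (fun _ => (hbr.posX _ L₂ h₂).le) hc.le (mul_left_cancel₀ hc.ne' (h0₁.symm.trans h0₂))
    (fun m hm hmn => (hi₁ m hm hmn).symm.trans (hi₂ m hm hmn)) (le_of_lt h₁) hL
    srlkDelta_eq_chainProd srlkDelta_eq_chainProd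

end Branch

theorem srlk_no_allostery_sup_eq_limit_general
    (n : ℕ) (K0 : ℝ) (K K' : Fin (n+1) → ℝ) (Nz : ℝ) (N : Fin (n+1) → ℝ)
    (hK0 : 0 < K0) (hK : ∀ i, 0 < K i)
    (hna : ∀ i, K i = K' i)
    (z : ℝ → ℝ) (x : Fin (n+1) → ℝ → ℝ)
    (hbr : SRLKBranch n K0 K K' Nz N z x) :
    ∃ c : ℝ,
      Filter.Tendsto (fun L => srlkSigma n K0 K (z L) L (fun i => x i L))
        Filter.atTop (nhds c) ∧
      ∀ L : ℝ, 0 < L → srlkSigma n K0 K (z L) L (fun i => x i L) ≤ c := by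
  obtain rfl : K = K' := funext hna
  have hσ : ∀ L, 0 < L → srlkSigma n K0 K (z L) L (fun i => x i L) =
      K0 * z 1 * srlkDelta n K L (fun i => x i L) := fun L hL => by
    rw [srlkSigma_eq_mul_srlkDelta, hbr.z_eq hK0 hK hL one_pos]
  have hmono : MonotoneOn (fun L => srlkSigma n K0 K (z L) L (fun i => x i L)) (Ioi 0) :=
    fun L₁ h₁ L₂ h₂ hL => by
      simp only [hσ L₁ h₁, hσ L₂ h₂]
      exact mul_le_mul_of_nonneg_left (hbr.monotoneOn_delta hK0 hK h₁ h₂ hL)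
        (mul_pos hK0 (hbr.posZ 1 one_pos)).le
  obtain ⟨C, hC⟩ := hbr.bddSigma
  exact hmono.exists_tendsto_atTop_of_bddAbove_Ioi
    ⟨C, forall_mem_image.2 fun L hL => (abs_le.1 (hC L hL)).2⟩

/-- along any SRLK steady-state branch with no allostery
(`K_i = K_i'`), the signalling function converges to a finite limit `c` as
`L → +∞` and is bounded above by `c` on `(0, ∞)`; i.e. its supremum equals its
limit at `+∞`. -/
theorem srlk_no_allostery_sup_eq_limit
    (n : ℕ) (K0 : ℝ) (K K' : Fin (n+1) → ℝ) (Nz : ℝ) (N : Fin (n+1) → ℝ)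
    (hK0 : 0 < K0) (hK : ∀ i, 0 < K i) (hK' : ∀ i, 0 < K' i)
    (hNz : 0 < Nz) (hN : ∀ i, 0 < N i)
    (hna : ∀ i, K i = K' i)
    (z : ℝ → ℝ) (x : Fin (n+1) → ℝ → ℝ)
    (hbr : SRLKBranch n K0 K K' Nz N z x) :
    ∃ c : ℝ,
      Filter.Tendsto (fun L => srlkSigma n K0 K (z L) L (fun i => x i L))
        Filter.atTop (nhds c) ∧
      ∀ L : ℝ, 0 < L → srlkSigma n K0 K (z L) L (fun i => x i L) ≤ c :=
  srlk_no_allostery_sup_eq_limit_general n K0 K K' Nz N hK0 hK hna z x hbr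
end
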